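/- arXiv:2604.03700 — 2 statements merged into one kernel-verified Lean document; each statement's English description precedes it below -/
import Mathlib

section
/- The group G presented by generators X₁, X₂, X₃ and relations Xᵢ³ = e (for all i) and XᵢXⱼXₖ = XₖXᵢXⱼ for all pairwise distinct i, j, k has order 81. -/
open FreeGroup

/-- Relators of the group `⟨X₁,X₂,X₃ : Xᵢ³ = e, XᵢXⱼXₖ = XₖXᵢXⱼ (i,j,k pairwise distinct)⟩`. -/
def chshRels : Set (FreeGroup (Fin 3)) :=
  {r | (∃ i : Fin 3, r = (FreeGroup.of i) ^ 3) ∨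
    (∃ i j k : Fin 3, i ≠ j ∧ j ≠ k ∧ i ≠ k ∧
      r = FreeGroup.of i * FreeGroup.of j * FreeGroup.of k *
        (FreeGroup.of k * FreeGroup.of i * FreeGroup.of j)⁻¹)}

/-
Put u = [X₁, X₂]. Each relation says that Xₖ commutes with XᵢXⱼ; this makes Xₖ commute with
[Xᵢ, Xⱼ] = XᵢXⱼ(XⱼXᵢ)⁻¹ and forces [X₁, X₂] = [X₂, X₃] = [X₃, X₁]. So u is central, and
u³ = [X₁³, X₂] = 1. Hence the normal forms X₁ⁱ X₂ʲ X₃ᵏ uˡ with exponents in ℤ/3 multiply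
according to an explicit group law on (ℤ/3)⁴, and that group satisfies the relations of G;
the two resulting homomorphisms are mutually inverse, so |G| = 3⁴.
-/

open scoped commutatorElement

section Commutator

variable {K : Type*} [Group K] {s t w x y z : K}

theorem Commute.commutatorElement_right_of_mul (h₁ : Commute z (x * y))
    (h₂ : Commute z (y * x)) : Commute z ⁅x, y⁆ := by
  rw [commutatorElement_def, mul_assoc, ← mul_inv_rev]
  exact h₁.mul_right h₂.inv_right

theorem commutatorElement_eq_of_commute_mul (hz : Commute z (y * x)) (hx : Commute x (y * z)) :
    ⁅x, y⁆ = ⁅y, z⁆ := by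
  have hz' : z * (x⁻¹ * y⁻¹) * z⁻¹ = x⁻¹ * y⁻¹ := by
    rw [← mul_inv_rev, hz.inv_right.eq, mul_inv_cancel_right]
  calc ⁅x, y⁆ = x * y * (z * (x⁻¹ * y⁻¹) * z⁻¹) := by rw [hz', commutatorElement_def]; group
    _ = x * (y * z) * x⁻¹ * (y⁻¹ * z⁻¹) := by group
    _ = ⁅y, z⁆ := by rw [hx.eq, commutatorElement_def]; group

theorem commutatorElement_pow_right (h : Commute t ⁅s, t⁆) (n : ℕ) :
    ⁅s, t ^ n⁆ = ⁅s, t⁆ ^ n := by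
  induction n with
  | zero => simp
  | succ n ih =>
    rw [pow_succ, commutatorElement_mul_right_eq_mul_conj, ih, mul_assoc _ (t ^ n),
      (h.pow_left n).eq, ← mul_assoc, mul_inv_cancel_right, pow_succ]

theorem commutatorElement_pow_left (h : Commute s ⁅s, t⁆) (m : ℕ) :
    ⁅s ^ m, t⁆ = ⁅s, t⁆ ^ m := by
  have h' : Commute s ⁅t, s⁆ := by rw [← commutatorElement_inv]; exact h.inv_right
  rw [← commutatorElement_inv, commutatorElement_pow_right h', ← inv_pow, commutatorElement_inv]

theorem commutatorElement_pow_pow (hs : Commute s ⁅s, t⁆) (ht : Commute t ⁅s, t⁆) (m n : ℕ) :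
    ⁅s ^ m, t ^ n⁆ = ⁅s, t⁆ ^ (m * n) := by
  have hsm : ⁅s ^ m, t⁆ = ⁅s, t⁆ ^ m := commutatorElement_pow_left hs m
  rw [commutatorElement_pow_right (hsm ▸ ht.pow_right m), hsm, pow_mul]

theorem commutatorElement_pow_eq_one {n : ℕ} (hs : Commute s ⁅s, t⁆) (ht : Commute t ⁅s, t⁆)
    (hn : s ^ n = 1) : ⁅s, t⁆ ^ n = 1 := by
  simpa [hn] using (commutatorElement_pow_pow hs ht n 1).symm

theorem pow_mul_pow_eq_of_commutatorElement_eq (hst : ⁅s, t⁆ = w) (hs : Commute s w)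
    (ht : Commute t w) (m n : ℕ) : s ^ m * t ^ n = t ^ n * s ^ m * w ^ (m * n) := by
  have hw : Commute (t ^ n * s ^ m) (w ^ (m * n)) :=
    ((ht.pow_left n).mul_left (hs.pow_left m)).pow_right _
  rw [hw.eq, ← hst, ← commutatorElement_pow_pow (hst ▸ hs) (hst ▸ ht), commutatorElement_def]
  group

end Commutator

section ZModPow

variable {K : Type*} [Group K] {g : K} {n : ℕ}

theorem pow_val_add [NeZero n] (hg : g ^ n = 1) (x y : ZMod n) :
    g ^ (x + y).val = g ^ (x.val + y.val) := by
  rw [ZMod.val_add, ← pow_eq_pow_mod _ hg]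

theorem zpow_eq_zpow_of_intCast_eq (hg : g ^ n = 1) {m m' : ℤ} (h : (m : ZMod n) = m') :
    g ^ m = g ^ m' :=
  zpow_eq_zpow_iff_modEq.mpr <|
    ((ZMod.intCast_eq_intCast_iff m m' n).mp h).of_dvd (Int.natCast_dvd_natCast.mpr
      (orderOf_dvd_of_pow_eq_one hg))

end ZModPow

@[ext]
structure ChshModel where
  a : ZMod 3
  b : ZMod 3
  c : ZMod 3
  u : ZMod 3
  deriving DecidableEq, Fintype

namespace ChshModel

/- `⟨i, j, k, l⟩` stands for the normal form X₁ⁱ X₂ʲ X₃ᵏ uˡ; the correction term in `u` comes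
from moving X₁^(w.a) left past X₂^(v.b) X₃^(v.c) and X₂^(w.b) left past X₃^(v.c). -/
instance : Mul ChshModel :=
  ⟨fun v w => ⟨v.a + w.a, v.b + w.b, v.c + w.c,
    v.u + w.u + v.c * w.a - v.b * w.a - v.c * w.b⟩⟩

instance : One ChshModel := ⟨⟨0, 0, 0, 0⟩⟩

instance : Inv ChshModel :=
  ⟨fun v => ⟨-v.a, -v.b, -v.c, -v.u + v.c * v.a - v.b * v.a - v.c * v.b⟩⟩

@[simp] theorem mul_a (v w : ChshModel) : (v * w).a = v.a + w.a := rfl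
@[simp] theorem mul_b (v w : ChshModel) : (v * w).b = v.b + w.b := rfl
@[simp] theorem mul_c (v w : ChshModel) : (v * w).c = v.c + w.c := rfl
@[simp] theorem mul_u (v w : ChshModel) :
    (v * w).u = v.u + w.u + v.c * w.a - v.b * w.a - v.c * w.b := rfl
@[simp] theorem one_a : (1 : ChshModel).a = 0 := rfl
@[simp] theorem one_b : (1 : ChshModel).b = 0 := rfl
@[simp] theorem one_c : (1 : ChshModel).c = 0 := rfl
@[simp] theorem one_u : (1 : ChshModel).u = 0 := rfl
@[simp] theorem inv_a (v : ChshModel) : v⁻¹.a = -v.a := rfl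
@[simp] theorem inv_b (v : ChshModel) : v⁻¹.b = -v.b := rfl
@[simp] theorem inv_c (v : ChshModel) : v⁻¹.c = -v.c := rfl
@[simp] theorem inv_u (v : ChshModel) : v⁻¹.u = -v.u + v.c * v.a - v.b * v.a - v.c * v.b := rfl

instance : Group ChshModel :=
  Group.ofLeftAxioms (fun _ _ _ => by ext <;> simp only [mul_a, mul_b, mul_c, mul_u] <;> ring)
    (fun _ => by ext <;> simp)
    (fun _ => by
      ext <;> simp only [mul_a, mul_b, mul_c, mul_u, inv_a, inv_b, inv_c, inv_u, one_a, one_b,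
        one_c, one_u] <;> ring)

theorem card_eq : Nat.card ChshModel = 81 := by
  rw [Nat.card_eq_fintype_card]; rfl

def gen : Fin 3 → ChshModel := ![⟨1, 0, 0, 0⟩, ⟨0, 1, 0, 0⟩, ⟨0, 0, 1, 0⟩]

theorem freeGroupLift_gen_eq_one : ∀ r ∈ chshRels, FreeGroup.lift gen r = 1 := by
  rintro r (⟨i, rfl⟩ | ⟨i, j, k, hij, hjk, hik, rfl⟩)
  · rw [map_pow, FreeGroup.lift_apply_of]
    revert i; decide
  · simp only [_root_.map_mul, _root_.map_inv, FreeGroup.lift_apply_of]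
    revert i j k; decide

variable {K : Type*} [Group K] {a b c u : K}

structure Relations (a b c u : K) : Prop where
  pow_a : a ^ 3 = 1
  pow_b : b ^ 3 = 1
  pow_c : c ^ 3 = 1
  commutatorElement_ab : ⁅a, b⁆ = u
  commutatorElement_bc : ⁅b, c⁆ = u
  commutatorElement_ca : ⁅c, a⁆ = u
  commute_a : Commute a u
  commute_b : Commute b u
  commute_c : Commute c u

namespace Relations

variable (h : Relations a b c u)
include h

theorem pow_u : u ^ 3 = 1 := by
  obtain rfl := h.commutatorElement_ab
  exact commutatorElement_pow_eq_one h.commute_a h.commute_b h.pow_a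

theorem normalForm_mul (i j k i' j' k' : ℕ) (l l' : ℤ) :
    a ^ i * b ^ j * c ^ k * u ^ l * (a ^ i' * b ^ j' * c ^ k' * u ^ l') =
      a ^ (i + i') * b ^ (j + j') * c ^ (k + k') *
        u ^ (l + l' + k * i' - j * i' - k * j') := by
  have hba : ⁅b, a⁆ = u⁻¹ := by rw [← commutatorElement_inv, h.commutatorElement_ab]
  have hcb : ⁅c, b⁆ = u⁻¹ := by rw [← commutatorElement_inv, h.commutatorElement_bc]
  have swap_ca (m n : ℕ) (t : K) :
      c ^ m * (a ^ n * t) = a ^ n * (c ^ m * (u ^ ((m : ℤ) * n) * t)) := by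
    rw [← mul_assoc, pow_mul_pow_eq_of_commutatorElement_eq h.commutatorElement_ca h.commute_c
      h.commute_a]
    simp [mul_assoc, ← zpow_natCast]
  have swap_ba (m n : ℕ) (t : K) :
      b ^ m * (a ^ n * t) = a ^ n * (b ^ m * (u ^ (-((m : ℤ) * n)) * t)) := by
    rw [← mul_assoc, pow_mul_pow_eq_of_commutatorElement_eq hba h.commute_b.inv_right
      h.commute_a.inv_right]
    simp [mul_assoc, ← zpow_natCast, zpow_neg]
  have swap_cb (m n : ℕ) (t : K) :
      c ^ m * (b ^ n * t) = b ^ n * (c ^ m * (u ^ (-((m : ℤ) * n)) * t)) := by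
    rw [← mul_assoc, pow_mul_pow_eq_of_commutatorElement_eq hcb h.commute_c.inv_right
      h.commute_b.inv_right]
    simp [mul_assoc, ← zpow_natCast, zpow_neg]
  have swap_u {x : K} (hx : Commute x u) (m : ℤ) (n : ℕ) (t : K) :
      u ^ m * (x ^ n * t) = x ^ n * (u ^ m * t) := by
    rw [← mul_assoc, ← ((hx.pow_left n).zpow_right m).eq, mul_assoc]
  have merge {x : K} (m n : ℕ) (t : K) : x ^ m * (x ^ n * t) = x ^ (m + n) * t := by
    rw [← mul_assoc, ← pow_add]
  simp only [mul_assoc, swap_ca, swap_ba, swap_cb, swap_u h.commute_a, swap_u h.commute_b,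
    swap_u h.commute_c, merge, ← zpow_add]
  congr 4
  ring

end Relations

def lift (h : Relations a b c u) : ChshModel →* K where
  toFun v := a ^ v.a.val * b ^ v.b.val * c ^ v.c.val * u ^ (v.u.val : ℤ)
  map_one' := by simp
  map_mul' v w := by
    rw [h.normalForm_mul, mul_a, mul_b, mul_c, mul_u, pow_val_add h.pow_a, pow_val_add h.pow_b,
      pow_val_add h.pow_c]
    congr 1
    exact zpow_eq_zpow_of_intCast_eq h.pow_u (by push_cast [ZMod.natCast_zmod_val]; ring)

theorem lift_gen {x : Fin 3 → K} (h : Relations (x 0) (x 1) (x 2) u) (i : Fin 3) :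
    lift h (gen i) = x i := by
  have hval : (1 : ZMod 3).val = 1 := rfl
  fin_cases i <;> simp [lift, gen, hval]

end ChshModel

section ChshRels

variable {K : Type*} [Group K] {x : Fin 3 → K} (hx : ∀ r ∈ chshRels, FreeGroup.lift x r = 1)
include hx

theorem pow_three_of_chshRels (i : Fin 3) : x i ^ 3 = 1 := by
  simpa using hx _ (Or.inl ⟨i, rfl⟩)

theorem commute_of_chshRels (i j k : Fin 3) (hij : i ≠ j := by decide) (hjk : j ≠ k := by decide)
    (hik : i ≠ k := by decide) : Commute (x k) (x i * x j) := by
  have hr := hx _ (Or.inr ⟨i, j, k, hij, hjk, hik, rfl⟩)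
  simp only [_root_.map_mul, _root_.map_inv, FreeGroup.lift_apply_of, mul_inv_eq_one] at hr
  rw [Commute, SemiconjBy, ← mul_assoc, hr]

theorem relations_of_chshRels : ChshModel.Relations (x 0) (x 1) (x 2) ⁅x 0, x 1⁆ := by
  have hab_bc : ⁅x 0, x 1⁆ = ⁅x 1, x 2⁆ :=
    commutatorElement_eq_of_commute_mul (commute_of_chshRels hx 1 0 2)
      (commute_of_chshRels hx 1 2 0)
  have hbc_ca : ⁅x 1, x 2⁆ = ⁅x 2, x 0⁆ :=
    commutatorElement_eq_of_commute_mul (commute_of_chshRels hx 2 1 0)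
      (commute_of_chshRels hx 2 0 1)
  refine ⟨pow_three_of_chshRels hx 0, pow_three_of_chshRels hx 1, pow_three_of_chshRels hx 2, rfl,
    hab_bc.symm, (hab_bc.trans hbc_ca).symm, ?_, ?_, ?_⟩
  · rw [hab_bc]
    exact (commute_of_chshRels hx 1 2 0).commutatorElement_right_of_mul
      (commute_of_chshRels hx 2 1 0)
  · rw [hab_bc, hbc_ca]
    exact (commute_of_chshRels hx 2 0 1).commutatorElement_right_of_mul
      (commute_of_chshRels hx 0 2 1)
  · exact (commute_of_chshRels hx 0 1 2).commutatorElement_right_of_mul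
      (commute_of_chshRels hx 1 0 2)

end ChshRels

theorem freeGroupLift_of_eq_one :
    ∀ r ∈ chshRels, FreeGroup.lift (PresentedGroup.of (rels := chshRels)) r = 1 := by
  intro r hr
  rw [show FreeGroup.lift PresentedGroup.of = PresentedGroup.mk chshRels from
    FreeGroup.ext_hom _ _ fun _ => FreeGroup.lift_apply_of]
  exact PresentedGroup.one_of_mem hr

noncomputable def chshMulEquiv : PresentedGroup chshRels ≃* ChshModel :=
  MonoidHom.toMulEquiv (PresentedGroup.toGroup ChshModel.freeGroupLift_gen_eq_one)
    (ChshModel.lift (relations_of_chshRels freeGroupLift_of_eq_one))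
    (PresentedGroup.ext fun i => by simp [ChshModel.lift_gen])
    (MonoidHom.ext fun v => by
      simp only [ChshModel.lift, MonoidHom.coe_comp, MonoidHom.coe_mk, OneHom.coe_mk,
        Function.comp_apply, _root_.map_mul, _root_.map_pow, _root_.map_zpow,
        map_commutatorElement, PresentedGroup.toGroup.of, MonoidHom.id_apply]
      revert v; decide)

/-- The group `⟨X₁,X₂,X₃ : Xᵢ³ = e, XᵢXⱼXₖ = XₖXᵢXⱼ for pairwise distinct i,j,k⟩`
has order 81. -/
theorem chsh_group_order : Nat.card (PresentedGroup chshRels) = 81 := by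
  rw [Nat.card_congr chshMulEquiv.toEquiv, ChshModel.card_eq]
end

section
/- Let p_d be the CHSH mod d Bell polynomial p_d = (1/d²) Σ_{i,j,k,l=1}^{d} δ(i+j−kl mod d) A_i^k B_j^l. If A_i^k and B_j^l are projection-valued measurements (projections with Σᵢ A_i^k = I and Σⱼ B_j^l = I for each k, l) with all A's commuting with all B's, and X_k = Σᵢ ω^{−i} A_i^k, Y_l = Σⱼ ω^{−j} B_j^l with ω = exp(2πi/d), then p_d(A,B) = (1/d³) Σ_{k,l,n=1}^{d} ω^{kln} X_k^n Y_l^n. -/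
open Matrix Finset

lemma pvm_pow {d m : ℕ} (A : Fin d → Matrix (Fin m) (Fin m) ℂ)
    (hproj : ∀ i j, A i * A j = if i = j then A i else 0)
    (hsum : ∑ i, A i = 1) (ω : ℂ) (hω : ω ≠ 0) (n : ℕ) :
    (∑ i, ω ^ (-(i.1 + 1 : ℤ)) • A i) ^ n
      = ∑ i, ω ^ (-(i.1 + 1 : ℤ) * n) • A i := by
  induction n with
  | zero => simpa using hsum.symm
  | succ n ih =>
    rw [pow_succ, ih, Finset.sum_mul_sum]
    refine Finset.sum_congr rfl fun i _ => ?_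
    rw [Finset.sum_eq_single i (fun j _ hj => by
      rw [smul_mul_smul_comm, hproj, if_neg (Ne.symm hj), smul_zero]) (by simp)]
    rw [smul_mul_smul_comm, hproj, if_pos rfl, ← zpow_add₀ hω]
    congr 1
    push_cast
    ring

lemma root_sum {d : ℕ} (hd : 0 < d) (ω : ℂ)
    (hω : ω = Complex.exp (2 * Real.pi * Complex.I / d)) (t : ℤ) :
    ∑ n : Fin d, ω ^ ((n.1 + 1 : ℤ) * t) = if (d : ℤ) ∣ t then (d : ℂ) else 0 := by
  have hprim : IsPrimitiveRoot ω d := hω ▸ Complex.isPrimitiveRoot_exp d hd.ne'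
  by_cases h : (d : ℤ) ∣ t
  · rw [if_pos h]
    have h1 : ω ^ t = 1 := (hprim.zpow_eq_one_iff_dvd t).2 h
    have : ∀ n : Fin d, ω ^ ((n.1 + 1 : ℤ) * t) = 1 := fun n => by
      rw [mul_comm, _root_.zpow_mul, h1, _root_.one_zpow]
    simp [this]
  · rw [if_neg h]
    have hz1 : ω ^ t ≠ 1 := fun c => h ((hprim.zpow_eq_one_iff_dvd t).1 c)
    have key : ∀ n : Fin d, ω ^ ((n.1 + 1 : ℤ) * t) = (ω ^ t) ^ (n.1 + 1) := fun n => by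
      rw [mul_comm, _root_.zpow_mul]; norm_cast
    rw [Finset.sum_congr rfl fun n _ => key n]
    rw [Fin.sum_univ_eq_sum_range (fun n => (ω ^ t) ^ (n + 1))]
    have : ∑ n ∈ Finset.range d, (ω ^ t) ^ (n + 1) = (ω ^ t) * ∑ n ∈ Finset.range d, (ω ^ t) ^ n := by
      rw [Finset.mul_sum]
      exact Finset.sum_congr rfl fun n _ => by ring
    rw [this, geom_sum_eq hz1]
    have : (ω ^ t) ^ d = 1 := by
      rw [← _root_.zpow_natCast, ← _root_.zpow_mul, mul_comm, _root_.zpow_mul, _root_.zpow_natCast,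
        hprim.pow_eq_one, _root_.one_zpow]
    rw [this]
    simp

/-- Rewriting the CHSH mod `d` Bell polynomial in terms of the observables
`X_k = Σᵢ ω^{−i} A_i^k` and `Y_l = Σⱼ ω^{−j} B_j^l`:
`(1/d²) Σ_{i,j,k,l} δ(i+j−kl mod d) A_i^k B_j^l = (1/d³) Σ_{k,l,n} ω^{kln} X_k^n Y_l^n`. -/
theorem chsh_mod_d_observable_form {d m : ℕ} (hd : 0 < d)
    (A B : Fin d → Fin d → Matrix (Fin m) (Fin m) ℂ)
    -- for each setting k, the (A k i)ᵢ are pairwise orthogonal projections summing to I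
    (hAproj : ∀ k i j, A k i * A k j = if i = j then A k i else 0)
    (hAsum : ∀ k, ∑ i, A k i = 1)
    (hBproj : ∀ l i j, B l i * B l j = if i = j then B l i else 0)
    (hBsum : ∀ l, ∑ j, B l j = 1)
    (hcomm : ∀ k i l j, A k i * B l j = B l j * A k i)
    (ω : ℂ) (hω : ω = Complex.exp (2 * Real.pi * Complex.I / d))
    (X Y : Fin d → Matrix (Fin m) (Fin m) ℂ)
    (hX : ∀ k, X k = ∑ i, ω ^ (-(i.1 + 1 : ℤ)) • A k i)
    (hY : ∀ l, Y l = ∑ j, ω ^ (-(j.1 + 1 : ℤ)) • B l j) :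
    (1 / (d : ℂ) ^ 2) •
        ∑ i : Fin d, ∑ j : Fin d, ∑ k : Fin d, ∑ l : Fin d,
          (if (d : ℤ) ∣ ((i.1 + 1 : ℤ) + (j.1 + 1) - (k.1 + 1) * (l.1 + 1)) then (1 : ℂ)
            else 0) • (A k i * B l j) =
      (1 / (d : ℂ) ^ 3) •
        ∑ k : Fin d, ∑ l : Fin d, ∑ n : Fin d,
          ω ^ ((k.1 + 1) * (l.1 + 1) * (n.1 + 1)) • (X k ^ (n.1 + 1) * Y l ^ (n.1 + 1)) := by
  have hd0 : (d : ℂ) ≠ 0 := Nat.cast_ne_zero.2 hd.ne'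
  have hω0 : ω ≠ 0 := by rw [hω]; exact Complex.exp_ne_zero _
  have step : ∀ k l n : Fin d,
      ω ^ ((k.1 + 1) * (l.1 + 1) * (n.1 + 1)) • (X k ^ (n.1 + 1) * Y l ^ (n.1 + 1))
        = ∑ i : Fin d, ∑ j : Fin d,
            ω ^ ((n.1 + 1 : ℤ) * ((k.1 + 1 : ℤ) * (l.1 + 1) - (i.1 + 1) - (j.1 + 1)))
              • (A k i * B l j) := by
    intro k l n
    rw [hX, hY, pvm_pow (A k) (hAproj k) (hAsum k) ω hω0,
        pvm_pow (B l) (hBproj l) (hBsum l) ω hω0, Finset.sum_mul_sum, Finset.smul_sum]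
    refine Finset.sum_congr rfl fun i _ => ?_
    rw [Finset.smul_sum]
    refine Finset.sum_congr rfl fun j _ => ?_
    rw [smul_mul_smul_comm, smul_smul, ← _root_.zpow_natCast ω ((k.1 + 1) * (l.1 + 1) * (n.1 + 1)),
        ← zpow_add₀ hω0, ← zpow_add₀ hω0]
    congr 1
    push_cast
    ring
  have step2 : ∀ k l : Fin d,
      (∑ n : Fin d, ω ^ ((k.1 + 1) * (l.1 + 1) * (n.1 + 1)) • (X k ^ (n.1 + 1) * Y l ^ (n.1 + 1)))
        = ∑ i : Fin d, ∑ j : Fin d,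
            (if (d : ℤ) ∣ ((k.1 + 1 : ℤ) * (l.1 + 1) - (i.1 + 1) - (j.1 + 1)) then (d : ℂ) else 0)
              • (A k i * B l j) := by
    intro k l
    calc (∑ n : Fin d, ω ^ ((k.1 + 1) * (l.1 + 1) * (n.1 + 1)) • (X k ^ (n.1 + 1) * Y l ^ (n.1 + 1)))
        = ∑ n : Fin d, ∑ i : Fin d, ∑ j : Fin d,
            ω ^ ((n.1 + 1 : ℤ) * ((k.1 + 1 : ℤ) * (l.1 + 1) - (i.1 + 1) - (j.1 + 1)))
              • (A k i * B l j) := Finset.sum_congr rfl fun n _ => step k l n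
      _ = ∑ i : Fin d, ∑ n : Fin d, ∑ j : Fin d,
            ω ^ ((n.1 + 1 : ℤ) * ((k.1 + 1 : ℤ) * (l.1 + 1) - (i.1 + 1) - (j.1 + 1)))
              • (A k i * B l j) := Finset.sum_comm
      _ = ∑ i : Fin d, ∑ j : Fin d, ∑ n : Fin d,
            ω ^ ((n.1 + 1 : ℤ) * ((k.1 + 1 : ℤ) * (l.1 + 1) - (i.1 + 1) - (j.1 + 1)))
              • (A k i * B l j) := Finset.sum_congr rfl fun i _ => Finset.sum_comm
      _ = ∑ i : Fin d, ∑ j : Fin d,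
            (if (d : ℤ) ∣ ((k.1 + 1 : ℤ) * (l.1 + 1) - (i.1 + 1) - (j.1 + 1)) then (d : ℂ) else 0)
              • (A k i * B l j) := by
          refine Finset.sum_congr rfl fun i _ => Finset.sum_congr rfl fun j _ => ?_
          rw [← Finset.sum_smul, root_sum hd ω hω]
  have hterm : ∀ k l i j : Fin d,
      (if (d : ℤ) ∣ ((k.1 + 1 : ℤ) * (l.1 + 1) - (i.1 + 1) - (j.1 + 1)) then (d : ℂ) else 0)
          • (A k i * B l j)
        = (d : ℂ) • ((if (d : ℤ) ∣ ((i.1 + 1 : ℤ) + (j.1 + 1) - (k.1 + 1) * (l.1 + 1)) then (1 : ℂ)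
            else 0) • (A k i * B l j)) := by
    intro k l i j
    have hiff : (d : ℤ) ∣ ((k.1 + 1 : ℤ) * (l.1 + 1) - (i.1 + 1) - (j.1 + 1)) ↔
        (d : ℤ) ∣ ((i.1 + 1 : ℤ) + (j.1 + 1) - (k.1 + 1) * (l.1 + 1)) := by
      rw [show ((i.1 + 1 : ℤ) + (j.1 + 1) - (k.1 + 1) * (l.1 + 1))
          = -((k.1 + 1 : ℤ) * (l.1 + 1) - (i.1 + 1) - (j.1 + 1)) by ring, dvd_neg]
    by_cases h : (d : ℤ) ∣ ((k.1 + 1 : ℤ) * (l.1 + 1) - (i.1 + 1) - (j.1 + 1))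
    · rw [if_pos h, if_pos (hiff.1 h), smul_smul, mul_one]
    · rw [if_neg h, if_neg (fun c => h (hiff.2 c)), zero_smul, smul_zero]
  have swap4 : ∀ f : Fin d → Fin d → Fin d → Fin d → Matrix (Fin m) (Fin m) ℂ,
      (∑ k : Fin d, ∑ l : Fin d, ∑ i : Fin d, ∑ j : Fin d, f k l i j)
        = ∑ i : Fin d, ∑ j : Fin d, ∑ k : Fin d, ∑ l : Fin d, f k l i j := by
    intro f
    calc (∑ k : Fin d, ∑ l : Fin d, ∑ i : Fin d, ∑ j : Fin d, f k l i j)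
        = ∑ k : Fin d, ∑ i : Fin d, ∑ l : Fin d, ∑ j : Fin d, f k l i j :=
          Finset.sum_congr rfl fun k _ => Finset.sum_comm
      _ = ∑ i : Fin d, ∑ k : Fin d, ∑ l : Fin d, ∑ j : Fin d, f k l i j := Finset.sum_comm
      _ = ∑ i : Fin d, ∑ k : Fin d, ∑ j : Fin d, ∑ l : Fin d, f k l i j :=
          Finset.sum_congr rfl fun i _ => Finset.sum_congr rfl fun k _ => Finset.sum_comm
      _ = ∑ i : Fin d, ∑ j : Fin d, ∑ k : Fin d, ∑ l : Fin d, f k l i j :=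
          Finset.sum_congr rfl fun i _ => Finset.sum_comm
  have hR : (∑ k : Fin d, ∑ l : Fin d, ∑ n : Fin d,
        ω ^ ((k.1 + 1) * (l.1 + 1) * (n.1 + 1)) • (X k ^ (n.1 + 1) * Y l ^ (n.1 + 1)))
      = (d : ℂ) • ∑ i : Fin d, ∑ j : Fin d, ∑ k : Fin d, ∑ l : Fin d,
          (if (d : ℤ) ∣ ((i.1 + 1 : ℤ) + (j.1 + 1) - (k.1 + 1) * (l.1 + 1)) then (1 : ℂ)
            else 0) • (A k i * B l j) := by
    calc (∑ k : Fin d, ∑ l : Fin d, ∑ n : Fin d,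
          ω ^ ((k.1 + 1) * (l.1 + 1) * (n.1 + 1)) • (X k ^ (n.1 + 1) * Y l ^ (n.1 + 1)))
        = ∑ k : Fin d, ∑ l : Fin d, ∑ i : Fin d, ∑ j : Fin d,
            (if (d : ℤ) ∣ ((k.1 + 1 : ℤ) * (l.1 + 1) - (i.1 + 1) - (j.1 + 1)) then (d : ℂ) else 0)
              • (A k i * B l j) :=
          Finset.sum_congr rfl fun k _ => Finset.sum_congr rfl fun l _ => step2 k l
      _ = ∑ k : Fin d, ∑ l : Fin d, ∑ i : Fin d, ∑ j : Fin d,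
            (d : ℂ) • ((if (d : ℤ) ∣ ((i.1 + 1 : ℤ) + (j.1 + 1) - (k.1 + 1) * (l.1 + 1))
              then (1 : ℂ) else 0) • (A k i * B l j)) := by
          refine Finset.sum_congr rfl fun k _ => Finset.sum_congr rfl fun l _ =>
            Finset.sum_congr rfl fun i _ => Finset.sum_congr rfl fun j _ => hterm k l i j
      _ = ∑ i : Fin d, ∑ j : Fin d, ∑ k : Fin d, ∑ l : Fin d,
            (d : ℂ) • ((if (d : ℤ) ∣ ((i.1 + 1 : ℤ) + (j.1 + 1) - (k.1 + 1) * (l.1 + 1))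
              then (1 : ℂ) else 0) • (A k i * B l j)) := swap4 _
      _ = (d : ℂ) • ∑ i : Fin d, ∑ j : Fin d, ∑ k : Fin d, ∑ l : Fin d,
            (if (d : ℤ) ∣ ((i.1 + 1 : ℤ) + (j.1 + 1) - (k.1 + 1) * (l.1 + 1)) then (1 : ℂ)
              else 0) • (A k i * B l j) := by
          simp only [← Finset.smul_sum]
  rw [hR, smul_smul]
  congr 1
  field_simp
end
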